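/- Let X₁,…,Xₙ be i.i.d. real random variables with mean μ > 0 and variance σ² satisfying σ²/μ² ≤ c² for some c > 0. Let ε > 0, let μ̂₁ > 0 be a fixed real number, set α = ε/(c²·μ̂₁) and ξ = μ/μ̂₁ − 1. Define W_{L,i} = μ̂₁ + α⁻¹·Ψ_L(α·(X_i − μ̂₁)) and W̄_L = (W_{L,1} + ⋯ + W_{L,n})/n. Then P(W̄_L < μ(1−ε)) ≤ exp(−(nε²/(2c²))·(1 − ξ²(1 + 1/c²))). -/

import Mathlib

open MeasureTheory ProbabilityTheory Real

/-- The lower envelope `Ψ_L(x) = -ln(1 - x + x²/2)` of the influence function. -/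
noncomputable def PsiL (x : ℝ) : ℝ := -Real.log (1 - x + x ^ 2 / 2)

lemma quad_pos (x : ℝ) : 0 < 1 - x + x ^ 2 / 2 := by nlinarith [sq_nonneg (x - 1)]

lemma exp_neg_psiL (x : ℝ) : Real.exp (-1 * PsiL x) = 1 - x + x ^ 2 / 2 := by
  rw [PsiL, neg_one_mul, neg_neg, Real.exp_log (quad_pos x)]

/-- Chernoff-style lower-tail bound for the Catoni-style robustified sample average:
with `α = ε/(c²μ̂₁)`, `ξ = μ/μ̂₁ - 1`, and `W_{L,i} = μ̂₁ + α⁻¹Ψ_L(α(Xᵢ - μ̂₁))`,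
`P(W̄_L < μ(1-ε)) ≤ exp(-(nε²/(2c²))(1 - ξ²(1 + 1/c²)))`. -/
theorem catoni_lower_tail_bound
    {Ω : Type*} [MeasurableSpace Ω] (P : Measure Ω) [IsProbabilityMeasure P]
    (n : ℕ) (c ε μ σ μhat₁ : ℝ) (hc : 0 < c) (hε : 0 < ε) (hμ : 0 < μ)
    (hμhat₁ : 0 < μhat₁)
    (X : Fin n → Ω → ℝ)
    (hmeas : ∀ i, Measurable (X i))
    (hindep : iIndepFun X P)
    (hident : ∀ i j, IdentDistrib (X i) (X j) P P)
    (hL2 : ∀ i, MemLp (X i) 2 P)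
    (hmean : ∀ i, (∫ ω, X i ω ∂P) = μ)
    (hvar : ∀ i, variance (X i) P = σ ^ 2)
    (hrel : σ ^ 2 / μ ^ 2 ≤ c ^ 2) :
    P {ω | (∑ i, (μhat₁ + (ε / (c ^ 2 * μhat₁))⁻¹ *
          PsiL (ε / (c ^ 2 * μhat₁) * (X i ω - μhat₁)))) / n < μ * (1 - ε)} ≤
      ENNReal.ofReal (Real.exp (-(n * ε ^ 2 / (2 * c ^ 2)) *
        (1 - (μ / μhat₁ - 1) ^ 2 * (1 + 1 / c ^ 2)))) := by
  set α : ℝ := ε / (c ^ 2 * μhat₁) with hα_def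
  have hα : 0 < α := by positivity
  have hσ2 : σ ^ 2 ≤ c ^ 2 * μ ^ 2 := by
    rw [div_le_iff₀ (by positivity)] at hrel
    linarith
  rcases Nat.eq_zero_or_pos n with hn | hn
  · subst hn
    have : -((0:ℕ) * ε ^ 2 / (2 * c ^ 2)) * (1 - (μ / μhat₁ - 1) ^ 2 * (1 + 1 / c ^ 2)) = 0 := by
      simp
    rw [this, Real.exp_zero, ENNReal.ofReal_one]
    exact prob_le_one
  have hn' : (0:ℝ) < n := by exact_mod_cast hn
  set Y : Fin n → Ω → ℝ := fun i ω => PsiL (α * (X i ω - μhat₁)) with hY_def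
  set t0 : ℝ := n * α * (μ * (1 - ε) - μhat₁) with ht0_def
  -- measurability of Y
  have hg : Measurable (fun x : ℝ => PsiL (α * (x - μhat₁))) := by
    unfold PsiL
    exact (Real.measurable_log.comp (by fun_prop)).neg
  have hYmeas : ∀ i, Measurable (Y i) := fun i => hg.comp (hmeas i)
  have hYindep : iIndepFun Y P :=
    hindep.comp (fun _ => fun x : ℝ => PsiL (α * (x - μhat₁))) (fun _ => hg)
  -- integrability
  have hIntX : ∀ i, Integrable (X i) P := fun i => (hL2 i).integrable (by norm_num)
  have hIntX2 : ∀ i, Integrable (fun ω => X i ω ^ 2) P := fun i => (hL2 i).integrable_sq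
  have hrewrite : ∀ i, (fun ω => Real.exp (-1 * Y i ω)) =
      fun ω => (1 + α * μhat₁ + α ^ 2 * μhat₁ ^ 2 / 2) + (-α - α ^ 2 * μhat₁) * X i ω
        + (α ^ 2 / 2) * X i ω ^ 2 := by
    intro i
    funext ω
    rw [hY_def, exp_neg_psiL]
    ring
  have hIntExp : ∀ i, Integrable (fun ω => Real.exp (-1 * Y i ω)) P := by
    intro i
    rw [hrewrite i]
    exact ((integrable_const _).add ((hIntX i).const_mul _)).add ((hIntX2 i).const_mul _)
  -- second moment
  have hM2 : ∀ i, (∫ ω, X i ω ^ 2 ∂P) = σ ^ 2 + μ ^ 2 := by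
    intro i
    have h := variance_eq_sub (hL2 i)
    rw [hvar i] at h
    have h2 : (∫ ω, (X i ^ 2) ω ∂P) = (∫ ω, X i ω ^ 2 ∂P) := by
      congr 1
    rw [show P[X i ^ 2] = (∫ ω, (X i ^ 2) ω ∂P) from rfl, h2,
      show P[X i] = μ from hmean i] at h
    linarith
  -- mgf of each Y i at -1
  set u : ℝ := -α * (μ - μhat₁) + α ^ 2 * (σ ^ 2 + (μ - μhat₁) ^ 2) / 2 with hu_def
  have hmgf : ∀ i, mgf (Y i) P (-1) = 1 + u := by
    intro i
    have hf1 : Integrable (fun ω => (1 + α * μhat₁ + α ^ 2 * μhat₁ ^ 2 / 2)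
        + (-α - α ^ 2 * μhat₁) * X i ω) P :=
      (integrable_const _).add ((hIntX i).const_mul _)
    have hf2 : Integrable (fun ω => (α ^ 2 / 2) * X i ω ^ 2) P := (hIntX2 i).const_mul _
    have hg1 : Integrable (fun _ : Ω => (1 + α * μhat₁ + α ^ 2 * μhat₁ ^ 2 / 2)) P :=
      integrable_const _
    have hg2 : Integrable (fun ω => (-α - α ^ 2 * μhat₁) * X i ω) P := (hIntX i).const_mul _
    have : mgf (Y i) P (-1) = ∫ ω, Real.exp (-1 * Y i ω) ∂P := rfl
    rw [this, hrewrite i, integral_add hf1 hf2, integral_add hg1 hg2,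
      integral_const_mul, integral_const_mul, integral_const, probReal_univ, hmean i, hM2 i]
    simp only [ENNReal.toReal_one, smul_eq_mul, one_mul]
    rw [hu_def]
    ring
  have humgf : 0 ≤ 1 + u := (hmgf ⟨0, hn⟩) ▸ mgf_nonneg
  -- Chernoff bound
  have hS_int : Integrable (fun ω => Real.exp ((-1) * (∑ i, Y i) ω)) P :=
    hYindep.integrable_exp_mul_sum hYmeas (fun i _ => hIntExp i)
  have hchern := measure_le_le_exp_mul_mgf (X := ∑ i, Y i) (μ := P) (t := -1) t0
    (by norm_num) hS_int
  rw [hYindep.mgf_sum hYmeas] at hchern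
  have hprod : (∏ i, mgf (Y i) P (-1)) ≤ Real.exp (n * u) := by
    calc (∏ i : Fin n, mgf (Y i) P (-1)) = (1 + u) ^ n := by
          rw [Finset.prod_congr rfl (fun i _ => hmgf i), Finset.prod_const, Finset.card_univ,
            Fintype.card_fin]
      _ ≤ Real.exp u ^ n := pow_le_pow_left₀ humgf (by linarith [Real.add_one_le_exp u]) n
      _ = Real.exp (n * u) := (Real.exp_nat_mul u n).symm
  -- main exponent inequality
  have hexp_le : t0 + n * u ≤ -(n * ε ^ 2 / (2 * c ^ 2)) *
      (1 - (μ / μhat₁ - 1) ^ 2 * (1 + 1 / c ^ 2)) := by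
    have heq1 : t0 + n * u =
        n * (α ^ 2 * σ ^ 2 / 2) + n * (-α * μ * ε + α ^ 2 * (μ - μhat₁) ^ 2 / 2) := by
      rw [ht0_def, hu_def]; ring
    have heq2 : -(n * ε ^ 2 / (2 * c ^ 2)) * (1 - (μ / μhat₁ - 1) ^ 2 * (1 + 1 / c ^ 2)) =
        n * (α ^ 2 * (c ^ 2 * μ ^ 2) / 2) + n * (-α * μ * ε + α ^ 2 * (μ - μhat₁) ^ 2 / 2) := by
      rw [hα_def]
      field_simp
      ring
    rw [heq1, heq2]
    have h2 : α ^ 2 * σ ^ 2 / 2 ≤ α ^ 2 * (c ^ 2 * μ ^ 2) / 2 := by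
      have := mul_le_mul_of_nonneg_left hσ2 (sq_nonneg α)
      linarith
    have h3 := mul_le_mul_of_nonneg_left h2 hn'.le
    linarith
  -- event inclusion
  have hsub : {ω | (∑ i, (μhat₁ + α⁻¹ * PsiL (α * (X i ω - μhat₁)))) / n < μ * (1 - ε)}
      ⊆ {ω | (∑ i, Y i) ω ≤ t0} := by
    intro ω hω
    simp only [Set.mem_setOf_eq] at hω ⊢
    rw [Finset.sum_apply]
    rw [div_lt_iff₀ hn', Finset.sum_add_distrib, Finset.sum_const, Finset.card_univ,
      Fintype.card_fin, ← Finset.mul_sum, nsmul_eq_mul] at hω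
    have h1 : α⁻¹ * ∑ i, PsiL (α * (X i ω - μhat₁)) < μ * (1 - ε) * n - n * μhat₁ := by
      linarith
    have h2 : ∑ i, PsiL (α * (X i ω - μhat₁)) < α * (μ * (1 - ε) * ↑n - ↑n * μhat₁) := by
      have := (mul_lt_mul_iff_right₀ hα).mpr h1
      rwa [← mul_assoc, mul_inv_cancel₀ hα.ne', one_mul] at this
    have h3 : α * (μ * (1 - ε) * ↑n - ↑n * μhat₁) = t0 := by rw [ht0_def]; ring
    simp only [hY_def]
    linarith
  -- conclude
  calc P {ω | (∑ i, (μhat₁ + α⁻¹ * PsiL (α * (X i ω - μhat₁)))) / n < μ * (1 - ε)}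
      ≤ P {ω | (∑ i, Y i) ω ≤ t0} := measure_mono hsub
    _ = ENNReal.ofReal (P {ω | (∑ i, Y i) ω ≤ t0}).toReal :=
        (ENNReal.ofReal_toReal (measure_ne_top _ _)).symm
    _ ≤ ENNReal.ofReal (Real.exp (-(n * ε ^ 2 / (2 * c ^ 2)) *
        (1 - (μ / μhat₁ - 1) ^ 2 * (1 + 1 / c ^ 2)))) := by
        apply ENNReal.ofReal_le_ofReal
        calc (P {ω | (∑ i, Y i) ω ≤ t0}).toReal
            ≤ Real.exp (-(-1) * t0) * ∏ i, mgf (Y i) P (-1) := hchern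
          _ ≤ Real.exp t0 * Real.exp (n * u) := by
              rw [neg_neg, one_mul]
              exact mul_le_mul_of_nonneg_left hprod (Real.exp_pos _).le
          _ = Real.exp (t0 + n * u) := (Real.exp_add _ _).symm
          _ ≤ _ := Real.exp_le_exp.mpr hexp_le
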